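/- Let G and 𝒱 be the graph and partition produced by the composition construction (described in the context) from graphs H_1,…,H_t on vertex set [n] and an integer k ≥ 1. Let G* be an induced subgraph of G whose vertex set contains some y_j ∈ Y and all of Q(G). If G* admits a proper k-coloring, then V(G*) ∖ Q(G) is an independent set in G. -/

import Mathlib

open Classical
noncomputable section

/-! ## The composition construction

Vertices of the composed graph `G` built from graphs `H 0, …, H (t-1)` on vertex set
`Fin n` and an integer `k ≥ 1`:

* `mkA n t k v u h i` is the gadget vertex `v_i(u)` of `G_v` (for `u ≠ v`), where
  `i : Fin 4` with `i ∈ {0, 1, 2}` encoding colors `1, 2, 3` and `i = 3` encoding `e`;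
* `mkQ n t k v q idx` is the `idx`-th vertex of the `q`-th clique of `Q(v)`, where
  `q : Fin 4` encodes `Q_{1,2}(v), Q_{1,3}(v), Q_{2,3}(v), Q_e(v)` (each clique has
  `k - 1` vertices);
* `mkY n t k j` is the vertex `y_j` of the independent set `Y`. -/
abbrev CompV (n t k : ℕ) : Type :=
  (({p : Fin n × Fin n // p.1 ≠ p.2} × Fin 4) ⊕ (Fin n × Fin 4 × Fin (k - 1))) ⊕ Fin t

def mkA (n t k : ℕ) (v u : Fin n) (h : v ≠ u) (i : Fin 4) : CompV n t k :=
  Sum.inl (Sum.inl (⟨(v, u), h⟩, i))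

def mkQ (n t k : ℕ) (v : Fin n) (q : Fin 4) (idx : Fin (k - 1)) : CompV n t k :=
  Sum.inl (Sum.inr (v, q, idx))

def mkY (n t k : ℕ) (j : Fin t) : CompV n t k := Sum.inr j

/-- Color index `i : Fin 4` belongs to clique index `q : Fin 4`, i.e. `A_i(v)` is
completely joined to the clique `Q_q(v)`:  `q = 0` is `Q_{1,2}`, `q = 1` is `Q_{1,3}`,
`q = 2` is `Q_{2,3}` and `q = 3` is `Q_e` (joined to `A_e(v)`, encoded by `i = 3`). -/
def inCliqueIdx (i q : Fin 4) : Prop :=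
  (q = 0 ∧ (i = 0 ∨ i = 1)) ∨ (q = 1 ∧ (i = 0 ∨ i = 2)) ∨
    (q = 2 ∧ (i = 1 ∨ i = 2)) ∨ (q = 3 ∧ i = 3)

/-- Base (one-directional) edge relation of the composed graph; it is symmetrized by
`SimpleGraph.fromRel` below.  The cases are: complete tripartite joins between
`A_1(v), A_2(v), A_3(v)` and the cross-gadget edges `v_i(u)u_i(v)` for `uv ∈ E(H_j)`;
the joins between `A_i(v)` and the cliques `Q_{i,ℓ}(v)` (and `A_e(v)` with `Q_e(v)`);
the four cliques of each `Q(v)`; edges from each `y_j` to all of `Q(G)`; and the edges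
from `y_j` to `v_e(u)` when `uv ∈ E(H_j)` and to `v_1(u), v_2(u), v_3(u)` otherwise. -/
def baseRel (n t k : ℕ) (H : Fin t → SimpleGraph (Fin n)) :
    CompV n t k → CompV n t k → Prop
  | Sum.inl (Sum.inl (⟨(v, u), _⟩, i)), Sum.inl (Sum.inl (⟨(v', u'), _⟩, i')) =>
      (v = v' ∧ i ≠ i' ∧ i ≠ 3 ∧ i' ≠ 3) ∨
        (i = i' ∧ i ≠ 3 ∧ v' = u ∧ u' = v ∧ ∃ j, (H j).Adj u v)
  | Sum.inl (Sum.inl (⟨(v, _), _⟩, i)), Sum.inl (Sum.inr (v', q, _)) =>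
      v = v' ∧ inCliqueIdx i q
  | Sum.inl (Sum.inr (v, q, _)), Sum.inl (Sum.inr (v', q', _)) => v = v' ∧ q = q'
  | Sum.inr _, Sum.inl (Sum.inr _) => True
  | Sum.inr j, Sum.inl (Sum.inl (⟨(v, u), _⟩, i)) =>
      ((H j).Adj v u ∧ i = 3) ∨ (¬ (H j).Adj v u ∧ i ≠ 3)
  | _, _ => False

/-- The graph `G` produced by the composition construction. -/
def compGraph (n t k : ℕ) (H : Fin t → SimpleGraph (Fin n)) : SimpleGraph (CompV n t k) :=
  SimpleGraph.fromRel (baseRel n t k H)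

/-- The set `Q(G) = ⋃_{v} Q(v)` of all clique vertices. -/
def QSet (n t k : ℕ) : Set (CompV n t k) :=
  {x | ∃ v q idx, x = mkQ n t k v q idx}

/-- The part `Y = {y_1, …, y_t}` of the partition `𝒱`. -/
def YPart (n t k : ℕ) : Finset (CompV n t k) :=
  Finset.univ.image (mkY n t k)

/-- The part `{v_1(u), v_2(u), v_3(u), v_e(u)}` of the partition `𝒱`. -/
def APart (n t k : ℕ) (v : Fin n) (u : {u : Fin n // v ≠ u}) : Finset (CompV n t k) :=
  Finset.univ.image (fun i : Fin 4 => mkA n t k v u.1 u.2 i)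

/-- The singleton parts `{x}`, `x ∈ Q(v)`, of the partition `𝒱`. -/
def QSingles (n t k : ℕ) (v : Fin n) : Finset (Finset (CompV n t k)) :=
  Finset.univ.image (fun p : Fin 4 × Fin (k - 1) => {mkQ n t k v p.1 p.2})

/-- The family `parts(G_v)` of parts contributed by the vertex gadget `G_v`. -/
def partsOf (n t k : ℕ) (v : Fin n) : Finset (Finset (CompV n t k)) :=
  (Finset.univ.image (fun u : {u : Fin n // v ≠ u} => APart n t k v u)) ∪ QSingles n t k v

/-- The partition `𝒱` of `V(G)`: the part `Y`, the parts `{v_1(u), v_2(u), v_3(u), v_e(u)}`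
and the singleton parts `{x}` for `x ∈ Q(G)`. -/
def parts (n t k : ℕ) : Finset (Finset (CompV n t k)) :=
  insert (YPart n t k) (Finset.univ.biUnion (partsOf n t k))

/-- A set of vertices is *selective* if it contains exactly one vertex of each part of
`𝒱` (the parts of `𝒱` cover all of `V(G)`, so it automatically contains no other
vertices). -/
def Selective (n t k : ℕ) (X : Set (CompV n t k)) : Prop :=
  ∀ P ∈ parts n t k, ∃! x, x ∈ X ∧ x ∈ P

/-- The vertex set of the gadget `G_v`. -/
def gadgetVerts (n t k : ℕ) (v : Fin n) : Finset (CompV n t k) :=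
  (Finset.univ.image
      (fun p : {u : Fin n // v ≠ u} × Fin 4 => mkA n t k v p.1.1 p.1.2 p.2)) ∪
    (Finset.univ.image (fun p : Fin 4 × Fin (k - 1) => mkQ n t k v p.1 p.2))



/-! Every vertex of `G` outside `Q(G)` is completely joined to one of the `(k-1)`-cliques
`Q_q(v)`, and so is `y_j`. In a proper `k`-colouring such a clique uses `k - 1` colours,
so every vertex of `W ∖ Q(G)` receives the colour of `y_j`; hence no two of them are
adjacent. -/

open Finset in
theorem SimpleGraph.color_eq_of_forall_adj_clique {V ι : Type*} [Fintype ι]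
    {G : SimpleGraph V} {W : Set V} {k : ℕ} {ψ : V → Fin k}
    (hψ : ∀ a ∈ W, ∀ b ∈ W, G.Adj a b → ψ a ≠ ψ b) (hk : k ≤ Fintype.card ι + 1)
    {f : ι → V} (hfW : ∀ i, f i ∈ W) (hf : Pairwise fun i i' => G.Adj (f i) (f i'))
    {x y : V} (hx : x ∈ W) (hy : y ∈ W) (hxf : ∀ i, G.Adj x (f i))
    (hyf : ∀ i, G.Adj y (f i)) : ψ x = ψ y := by
  by_contra hxy
  have hinj : Function.Injective (ψ ∘ f) := fun i i' h =>
    by_contra fun hii' => hψ _ (hfW i) _ (hfW i') (hf hii') h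
  have notMem {z : V} (hz : z ∈ W) (hzf : ∀ i, G.Adj z (f i)) :
      ψ z ∉ univ.image (ψ ∘ f) := by
    simp only [mem_image, mem_univ, true_and, Function.comp_apply, not_exists]
    exact fun i hi => hψ _ hz _ (hfW i) (hzf i) hi.symm
  have hcard := card_le_univ (insert (ψ x) (insert (ψ y) (univ.image (ψ ∘ f))))
  rw [card_insert_of_notMem (by simp [hxy, notMem hx hxf]),
    card_insert_of_notMem (notMem hy hyf), card_image_of_injective _ hinj, card_univ,
    Fintype.card_fin] at hcard
  omega

theorem exists_inCliqueIdx (i : Fin 4) : ∃ q, inCliqueIdx i q := by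
  fin_cases i
  · exact ⟨0, by simp [inCliqueIdx]⟩
  · exact ⟨0, by simp [inCliqueIdx]⟩
  · exact ⟨1, by simp [inCliqueIdx]⟩
  · exact ⟨3, by simp [inCliqueIdx]⟩

section compGraph

variable {n t k : ℕ} {H : Fin t → SimpleGraph (Fin n)}

theorem compGraph_adj_mkY_mkQ (j : Fin t) (v : Fin n) (q : Fin 4) (idx : Fin (k - 1)) :
    (compGraph n t k H).Adj (mkY n t k j) (mkQ n t k v q idx) := by
  rw [compGraph, SimpleGraph.fromRel_adj]
  exact ⟨by simp [mkY, mkQ], Or.inl (by simp [baseRel, mkY, mkQ])⟩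

theorem compGraph_adj_mkQ_mkQ (v : Fin n) (q : Fin 4) {idx idx' : Fin (k - 1)}
    (h : idx ≠ idx') : (compGraph n t k H).Adj (mkQ n t k v q idx) (mkQ n t k v q idx') := by
  rw [compGraph, SimpleGraph.fromRel_adj]
  exact ⟨by simp [mkQ, h], Or.inl (by simp [baseRel, mkQ])⟩

theorem compGraph_adj_mkA_mkQ {v u : Fin n} (h : v ≠ u) {i q : Fin 4} (hq : inCliqueIdx i q)
    (idx : Fin (k - 1)) : (compGraph n t k H).Adj (mkA n t k v u h i) (mkQ n t k v q idx) := by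
  rw [compGraph, SimpleGraph.fromRel_adj]
  exact ⟨by simp [mkA, mkQ], Or.inl ⟨rfl, hq⟩⟩

theorem compGraph_exists_forall_adj_mkQ (hn : 0 < n) {x : CompV n t k} (hx : x ∉ QSet n t k) :
    ∃ v q, ∀ idx, (compGraph n t k H).Adj x (mkQ n t k v q idx) := by
  rcases x with (⟨⟨⟨v, u⟩, h⟩, i⟩ | ⟨v, q, idx⟩) | j
  · obtain ⟨q, hq⟩ := exists_inCliqueIdx i
    exact ⟨v, q, compGraph_adj_mkA_mkQ h hq⟩
  · exact absurd ⟨v, q, idx, rfl⟩ hx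
  · exact ⟨⟨0, hn⟩, 0, compGraph_adj_mkY_mkQ j _ _⟩

theorem compGraph_color_eq_of_notMem_QSet (hn : 0 < n) (j : Fin t) {W : Set (CompV n t k)}
    (hy : mkY n t k j ∈ W) (hQ : QSet n t k ⊆ W) {ψ : CompV n t k → Fin k}
    (hψ : ∀ a ∈ W, ∀ b ∈ W, (compGraph n t k H).Adj a b → ψ a ≠ ψ b)
    {x : CompV n t k} (hx : x ∈ W \ QSet n t k) : ψ x = ψ (mkY n t k j) := by
  obtain ⟨v, q, hxQ⟩ := compGraph_exists_forall_adj_mkQ hn hx.2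
  exact SimpleGraph.color_eq_of_forall_adj_clique hψ (by rw [Fintype.card_fin]; omega)
    (fun idx => hQ ⟨v, q, idx, rfl⟩) (fun _ _ h => compGraph_adj_mkQ_mkQ v q h) hx.1 hy hxQ
    (compGraph_adj_mkY_mkQ j v q)

end compGraph

theorem comp_backward_independent_general
    (n t k : ℕ) (hn : 2 ≤ n)
    (H : Fin t → SimpleGraph (Fin n)) (j : Fin t)
    (W : Set (CompV n t k)) (hy : mkY n t k j ∈ W) (hQ : QSet n t k ⊆ W)
    (hcol : ∃ ψ : CompV n t k → Fin k,
      ∀ a ∈ W, ∀ b ∈ W, (compGraph n t k H).Adj a b → ψ a ≠ ψ b) :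
    ∀ a ∈ W \ QSet n t k, ∀ b ∈ W \ QSet n t k, ¬ (compGraph n t k H).Adj a b := by
  obtain ⟨ψ, hψ⟩ := hcol
  intro a ha b hb hab
  have hn₀ : 0 < n := by omega
  refine hψ a ha.1 b hb.1 hab ?_
  rw [compGraph_color_eq_of_notMem_QSet hn₀ j hy hQ hψ ha,
    compGraph_color_eq_of_notMem_QSet hn₀ j hy hQ hψ hb]

/-- key intermediate claim in the backward direction of Lemma 7.
Let `G` and `𝒱` be produced by the composition construction from `H_1, …, H_t` on
vertex set `[n]` and `k ≥ 1`.  If `G*` is an induced subgraph of `G` whose vertex set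
`W` contains some `y_j ∈ Y` and all of `Q(G)`, and `G*` admits a proper `k`-coloring,
then `W ∖ Q(G)` is an independent set in `G`. -/
theorem comp_backward_independent
    (n t k : ℕ) (hn : 2 ≤ n) (ht : 1 ≤ t) (hk : 1 ≤ k)
    (H : Fin t → SimpleGraph (Fin n)) (j : Fin t)
    (W : Set (CompV n t k)) (hy : mkY n t k j ∈ W) (hQ : QSet n t k ⊆ W)
    (hcol : ∃ ψ : CompV n t k → Fin k,
      ∀ a ∈ W, ∀ b ∈ W, (compGraph n t k H).Adj a b → ψ a ≠ ψ b) :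
    ∀ a ∈ W \ QSet n t k, ∀ b ∈ W \ QSet n t k, ¬ (compGraph n t k H).Adj a b :=
  comp_backward_independent_general n t k hn H j W hy hQ hcol

end
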